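/- Let 2 ≤ e ≤ m be integers. Then the family {[S] : S ∈ C(m,e)} is a partition of L(m,e): every numerical semigroup with multiplicity m and embedding dimension e belongs to [S] for some packed S ∈ C(m,e), each class [S] is nonempty, and if S, T ∈ C(m,e) with S ≠ T then [S] ∩ [T] = ∅. -/

import Mathlib

open scoped Pointwise

/-- A numerical semigroup: an additive submonoid of ℕ with finite complement. -/
def IsNumericalSemigroup (S : Set ℕ) : Prop :=
  0 ∈ S ∧ (∀ a ∈ S, ∀ b ∈ S, a + b ∈ S) ∧ Sᶜ.Finite

/-- Multiplicity: the least positive element. -/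
noncomputable def mult (S : Set ℕ) : ℕ := sInf (S \ {0})

/-- Minimal system of generators: (S∖{0}) ∖ ((S∖{0})+(S∖{0})). -/
def msg (S : Set ℕ) : Set ℕ := (S \ {0}) \ ((S \ {0}) + (S \ {0}))

/-- Embedding dimension: cardinality of the minimal system of generators. -/
noncomputable def edim (S : Set ℕ) : ℕ := (msg S).ncard

/-- The submonoid of (ℕ,+) generated by a set, as a set. -/
def genSet (B : Set ℕ) : Set ℕ := (AddSubmonoid.closure B : Set ℕ)

/-- Packed numerical semigroup: msg(S) ⊆ {m(S),…,2m(S)−1}. -/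
def IsPacked (S : Set ℕ) : Prop := msg S ⊆ Set.Icc (mult S) (2 * mult S - 1)

/-- L(m,e): numerical semigroups with multiplicity m and embedding dimension e. -/
def Lset (m e : ℕ) : Set (Set ℕ) :=
  {S | IsNumericalSemigroup S ∧ mult S = m ∧ edim S = e}

/-- C(m,e): packed numerical semigroups in L(m,e). -/
def Cset (m e : ℕ) : Set (Set ℕ) := {S ∈ Lset m e | IsPacked S}

/-- φ(S): the monoid generated by {m + (x mod m) : x ∈ msg(S)}, m = mult S. -/
noncomputable def phi (S : Set ℕ) : Set ℕ :=
  genSet ((fun x => mult S + x % mult S) '' msg S)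

/-- The class [S] = {T ∈ L(m,e) : φ(T) = φ(S)}. -/
def classOf (m e : ℕ) (S : Set ℕ) : Set (Set ℕ) := {T ∈ Lset m e | phi T = phi S}

/-- Frobenius number: the largest element of the complement. -/
noncomputable def Frob (S : Set ℕ) : ℕ := sSup Sᶜ

/-- Genus: the cardinality of the complement. -/
noncomputable def genus (S : Set ℕ) : ℕ := Sᶜ.ncard

/-- The Apéry set of n in S. -/
def Ap (S : Set ℕ) (n : ℕ) : Set ℕ := {s ∈ S | ¬ ∃ t ∈ S, s = t + n}

/-- Minimal elements of a set in a partial order. -/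
def minimalsOf {β : Type*} [PartialOrder β] (X : Set β) : Set β :=
  {x ∈ X | ∀ y ∈ X, y ≤ x → y = x}


/-! Minimal generators of a numerical semigroup of multiplicity `m` are pairwise incongruent
mod `m`, so replacing each of them by the representative of its class in `[m, 2m)` gives `e`
distinct generators in `[m, 2m)`. These are then exactly the minimal generators of `φ(S)`, and
since `S` and `φ(S)` reach the same residues mod `m`, `φ(S)` is a packed numerical semigroup in
`L(m,e)`. A packed semigroup is fixed by `φ`, so `φ` is a retraction of `L(m,e)` onto `C(m,e)`
and the classes `[S]` are its fibres. -/

section GenSet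

variable {B : Set ℕ}

lemma subset_genSet (B : Set ℕ) : B ⊆ genSet B := AddSubmonoid.subset_closure

lemma genSet_induction {p : ℕ → Prop} (mem : ∀ x ∈ B, p x) (zero : p 0)
    (add : ∀ x y, p x → p y → p (x + y)) {x : ℕ} (hx : x ∈ genSet B) : p x :=
  AddSubmonoid.closure_induction (motive := fun x _ => p x) mem zero (fun x y _ _ => add x y) hx

lemma eq_zero_or_le_of_mem_genSet {m : ℕ} (hB : ∀ b ∈ B, m ≤ b) {x : ℕ} (hx : x ∈ genSet B) :
    x = 0 ∨ m ≤ x :=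
  genSet_induction (p := fun x => x = 0 ∨ m ≤ x) (fun b hb => .inr (hB b hb)) (.inl rfl)
    (by rintro a b (rfl | ha) (rfl | hb) <;> omega) hx

lemma mult_genSet {m : ℕ} (hm : 0 < m) (hmB : m ∈ B) (hB : ∀ b ∈ B, m ≤ b) :
    mult (genSet B) = m :=
  IsLeast.csInf_eq ⟨⟨subset_genSet B hmB, hm.ne'⟩,
    fun _ hx => (eq_zero_or_le_of_mem_genSet hB hx.1).resolve_left hx.2⟩

lemma msg_genSet_subset (B : Set ℕ) : msg (genSet B) ⊆ B := by
  set N := genSet B \ {0}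
  have hdecomp : ∀ x ∈ genSet B, x = 0 ∨ x ∈ B ∨ x ∈ N + N := by
    intro x hx
    induction hx using AddSubmonoid.closure_induction with
    | mem b hb => exact .inr (.inl hb)
    | zero => exact .inl rfl
    | add a b ha hb iha ihb =>
      rcases eq_or_ne a 0 with rfl | ha0
      · simpa using ihb
      rcases eq_or_ne b 0 with rfl | hb0
      · simpa using iha
      exact .inr (.inr ⟨a, ⟨ha, ha0⟩, b, ⟨hb, hb0⟩, rfl⟩)
  rintro x ⟨⟨hx, hx0⟩, hxN⟩
  exact ((hdecomp x hx).resolve_left hx0).resolve_right hxN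

lemma subset_msg_genSet {m : ℕ} (hB : B ⊆ Set.Ico m (2 * m)) : B ⊆ msg (genSet B) := by
  have hlo : ∀ b ∈ B, m ≤ b := fun b hb => (hB hb).1
  intro b hb
  obtain ⟨hmb, hb2⟩ := hB hb
  refine ⟨⟨subset_genSet B hb, show b ≠ 0 by omega⟩, ?_⟩
  rintro ⟨u, ⟨hu, hu0⟩, v, ⟨hv, hv0⟩, rfl⟩
  have := (eq_zero_or_le_of_mem_genSet hlo hu).resolve_left hu0
  have := (eq_zero_or_le_of_mem_genSet hlo hv).resolve_left hv0
  simp only at hb2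
  omega

lemma exists_mem_genSet_image_modEq {A : Set ℕ} {f : ℕ → ℕ} {m : ℕ}
    (hf : ∀ x ∈ A, f x ≡ x [MOD m]) {x : ℕ} (hx : x ∈ genSet A) :
    ∃ s ∈ genSet (f '' A), s ≡ x [MOD m] :=
  genSet_induction (p := fun x => ∃ s ∈ genSet (f '' A), s ≡ x [MOD m])
    (fun y hy => ⟨f y, subset_genSet _ ⟨y, hy, rfl⟩, hf y hy⟩)
    ⟨0, (AddSubmonoid.closure _).zero_mem, rfl⟩
    (fun _ _ ⟨s, hs, hsx⟩ ⟨t, ht, hty⟩ =>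
      ⟨s + t, (AddSubmonoid.closure _).add_mem hs ht, hsx.add hty⟩) hx

end GenSet

lemma AddSubmonoid.finite_compl_of_forall_exists_modEq (P : AddSubmonoid ℕ) {m : ℕ} (hm : 0 < m)
    (hmP : m ∈ P) (hres : ∀ r, ∃ s ∈ P, s ≡ r [MOD m]) : (P : Set ℕ)ᶜ.Finite := by
  choose g hgP hgr using hres
  refine (Set.finite_Iio ((Finset.range m).sup g)).subset fun n hn => ?_
  by_contra hge
  have hgn : g (n % m) ≤ n :=
    (Finset.le_sup (Finset.mem_range.mpr (Nat.mod_lt n hm))).trans (not_lt.mp hge)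
  obtain ⟨k, hk⟩ := (Nat.modEq_iff_dvd' hgn).mp ((hgr (n % m)).trans (Nat.mod_modEq n m))
  have hn_eq : n = g (n % m) + k • m := by rw [smul_eq_mul, mul_comm]; omega
  exact hn (hn_eq ▸ P.add_mem (hgP _) (P.nsmul_mem hmP k))

def phiGens (S : Set ℕ) : Set ℕ := (fun x => mult S + x % mult S) '' msg S

lemma phi_eq_genSet_phiGens (S : Set ℕ) : phi S = genSet (phiGens S) := rfl

lemma mult_le_of_mem {S : Set ℕ} {x : ℕ} (hx : x ∈ S \ {0}) : mult S ≤ x := Nat.sInf_le hx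

namespace IsNumericalSemigroup

variable {S : Set ℕ} (hS : IsNumericalSemigroup S)
include hS

lemma exists_forall_le_mem : ∃ N, ∀ n, N ≤ n → n ∈ S := by
  obtain ⟨N, hN⟩ := hS.2.2.bddAbove
  exact ⟨N + 1, fun n hn => by_contra fun h => by have := hN h; omega⟩

lemma exists_mem_modEq {m : ℕ} (hm : 0 < m) (r : ℕ) : ∃ s ∈ S, s ≡ r [MOD m] := by
  obtain ⟨N, hN⟩ := hS.exists_forall_le_mem
  exact ⟨r + N * m, hN _ (by nlinarith), Nat.add_mul_mod_self_right r N m⟩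

lemma mul_mem {x : ℕ} (hx : x ∈ S) (k : ℕ) : k * x ∈ S := by
  induction k with
  | zero => simpa using hS.1
  | succ k ih => simpa [add_mul] using hS.2.1 _ ih _ hx

lemma mult_mem : mult S ∈ S \ {0} := by
  obtain ⟨N, hN⟩ := hS.exists_forall_le_mem
  exact Nat.sInf_mem ⟨N + 1, hN _ N.le_succ, N.succ_ne_zero⟩

lemma mult_pos : 0 < mult S := Nat.pos_of_ne_zero hS.mult_mem.2

lemma mult_mem_msg : mult S ∈ msg S := by
  refine ⟨hS.mult_mem, ?_⟩
  rintro ⟨a, ha, b, hb, hab⟩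
  have := mult_le_of_mem ha
  have := mult_le_of_mem hb
  have := hS.mult_pos
  simp only at hab
  omega

lemma genSet_msg : genSet (msg S) = S := by
  refine subset_antisymm (fun x hx => genSet_induction (fun y hy => hy.1.1) hS.1
    (fun a b ha hb => hS.2.1 a ha b hb) hx) fun x hx => ?_
  induction x using Nat.strong_induction_on with
  | _ x ih =>
    rcases eq_or_ne x 0 with rfl | hx0
    · exact (AddSubmonoid.closure _).zero_mem
    by_cases hxmsg : x ∈ msg S
    · exact subset_genSet _ hxmsg
    obtain ⟨a, ⟨ha, ha0⟩, b, ⟨hb, hb0⟩, hab⟩ : x ∈ (S \ {0}) + (S \ {0}) := by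
      by_contra h
      exact hxmsg ⟨⟨hx, hx0⟩, h⟩
    have ha0 : a ≠ 0 := ha0
    have hb0 : b ≠ 0 := hb0
    simp only at hab
    subst hab
    exact (AddSubmonoid.closure _).add_mem (ih a (by omega) ha) (ih b (by omega) hb)

lemma mod_injOn_msg : Set.InjOn (· % mult S) (msg S) := by
  have key : ∀ a ∈ msg S, ∀ b ∈ msg S, a ≤ b → a % mult S = b % mult S → a = b := by
    intro a ha b hb hab hmod
    obtain ⟨k, hk⟩ := (Nat.modEq_iff_dvd' hab).mp hmod
    by_contra hne
    refine hb.2 ⟨a, ha.1, mult S * k, ⟨mul_comm k (mult S) ▸ hS.mul_mem hS.mult_mem.1 k, ?_⟩, ?_⟩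
    · simp only [Set.mem_singleton_iff]
      omega
    · simp only
      omega
  intro a ha b hb hab
  rcases le_total a b with h | h
  · exact key a ha b hb h hab
  · exact (key b hb a ha h hab.symm).symm

lemma phiGens_subset_Ico : phiGens S ⊆ Set.Ico (mult S) (2 * mult S) := by
  rintro _ ⟨x, -, rfl⟩
  have := Nat.mod_lt x hS.mult_pos
  simp only [Set.mem_Ico]
  constructor <;> omega

lemma mult_mem_phiGens : mult S ∈ phiGens S := ⟨mult S, hS.mult_mem_msg, by simp⟩

lemma ncard_phiGens : (phiGens S).ncard = edim S :=
  Set.InjOn.ncard_image fun _ ha _ hb h => hS.mod_injOn_msg ha hb (Nat.add_left_cancel h)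

lemma msg_phi : msg (phi S) = phiGens S :=
  (msg_genSet_subset _).antisymm (subset_msg_genSet hS.phiGens_subset_Ico)

lemma mult_phi : mult (phi S) = mult S :=
  mult_genSet hS.mult_pos hS.mult_mem_phiGens fun _ hb => (hS.phiGens_subset_Ico hb).1

lemma edim_phi : edim (phi S) = edim S := by
  rw [edim, hS.msg_phi, hS.ncard_phiGens]

protected lemma phi : IsNumericalSemigroup (phi S) := by
  set P := AddSubmonoid.closure (phiGens S)
  refine ⟨P.zero_mem, fun _ ha _ hb => P.add_mem ha hb, ?_⟩
  refine P.finite_compl_of_forall_exists_modEq hS.mult_pos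
    (subset_genSet _ hS.mult_mem_phiGens) fun r => ?_
  obtain ⟨x, hx, hxr⟩ := hS.exists_mem_modEq hS.mult_pos r
  obtain ⟨s, hs, hsx⟩ := exists_mem_genSet_image_modEq (m := mult S)
    (f := fun x => mult S + x % mult S) (fun y _ => by simp [Nat.ModEq]) (hS.genSet_msg.symm ▸ hx)
  exact ⟨s, hs, hsx.trans hxr⟩

lemma isPacked_phi : IsPacked (phi S) := by
  rw [IsPacked, hS.msg_phi, hS.mult_phi]
  intro x hx
  obtain ⟨hmx, hx2⟩ := hS.phiGens_subset_Ico hx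
  exact ⟨hmx, by omega⟩

lemma phi_eq_self_of_isPacked (hP : IsPacked S) : phi S = S := by
  have hgens : phiGens S = msg S := by
    refine (Set.image_congr fun x hx => ?_).trans (Set.image_id' _)
    obtain ⟨hmx, hx2⟩ := hP hx
    have := hS.mult_pos
    rw [Nat.mod_eq_sub_mod hmx, Nat.mod_eq_of_lt (by omega)]
    omega
  rw [phi_eq_genSet_phiGens, hgens, hS.genSet_msg]

end IsNumericalSemigroup

lemma phi_mem_Cset {m e : ℕ} {T : Set ℕ} (hT : T ∈ Lset m e) : phi T ∈ Cset m e := by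
  obtain ⟨hT, rfl, rfl⟩ := hT
  exact ⟨⟨hT.phi, hT.mult_phi, hT.edim_phi⟩, hT.isPacked_phi⟩

theorem stmt2_general (m e : ℕ) :
    (∀ T ∈ Lset m e, ∃ S ∈ Cset m e, T ∈ classOf m e S) ∧
    (∀ S ∈ Cset m e, (classOf m e S).Nonempty) ∧
    (∀ S ∈ Cset m e, ∀ T ∈ Cset m e, S ≠ T → classOf m e S ∩ classOf m e T = ∅) := by
  have phi_eq_self : ∀ S ∈ Cset m e, phi S = S := fun S hS => hS.1.1.phi_eq_self_of_isPacked hS.2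
  refine ⟨fun T hT => ⟨phi T, phi_mem_Cset hT, hT, (phi_eq_self _ (phi_mem_Cset hT)).symm⟩,
    fun S hS => ⟨S, hS.1, rfl⟩, fun S hS T hT hST => ?_⟩
  refine Set.eq_empty_of_forall_notMem fun U ⟨⟨_, hUS⟩, ⟨_, hUT⟩⟩ => hST ?_
  rw [← phi_eq_self S hS, ← phi_eq_self T hT, ← hUS, ← hUT]

/-- {[S] : S ∈ C(m,e)} is a partition of L(m,e). -/
theorem stmt2 (m e : ℕ) (h2 : 2 ≤ e) (hem : e ≤ m) :
    (∀ T ∈ Lset m e, ∃ S ∈ Cset m e, T ∈ classOf m e S) ∧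
    (∀ S ∈ Cset m e, (classOf m e S).Nonempty) ∧
    (∀ S ∈ Cset m e, ∀ T ∈ Cset m e, S ≠ T → classOf m e S ∩ classOf m e T = ∅) :=
  stmt2_general m e
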